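/- arXiv:2504.13606 — 6 statements merged into one kernel-verified Lean document; each statement's English description precedes it below -/
import Mathlib

section
/- Let p be a prime and m a positive nonzero integer. The least positive integer n such that p does not divide C(m, n) is exactly p^{v_p(m)}. -/
lemma lucas_pow_choose (p : ℕ) (hp : p.Prime) (v u : ℕ) :
    (p ^ v * u).choose (p ^ v) ≡ u [MOD p] := by
  haveI : Fact p.Prime := ⟨hp⟩
  induction v with
  | zero => simpa using Nat.ModEq.refl u
  | succ v ih =>
      have hp0 : 0 < p := hp.pos
      have h := Choose.choose_modEq_choose_mod_mul_choose_div_nat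
        (n := p ^ (v+1) * u) (k := p ^ (v+1)) (p := p)
      rw [show p ^ (v+1) * u = p * (p ^ v * u) by ring,
        show p ^ (v+1) = p * p ^ v by ring] at h ⊢
      rw [Nat.mul_mod_right, Nat.mul_mod_right, Nat.mul_div_cancel_left _ hp0,
        Nat.mul_div_cancel_left _ hp0] at h
      rw [Nat.choose_self, one_mul] at h
      exact h.trans ih

/-- The least positive integer `n` with `p ∤ C(m, n)` is exactly `p^{v_p(m)}`. -/
theorem least_nondivisible_binom
    (p m : ℕ) (hp : p.Prime) (hm : 0 < m) :
    IsLeast {n : ℕ | 0 < n ∧ ¬ p ∣ m.choose n} (p ^ padicValNat p m) := by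
  haveI : Fact p.Prime := ⟨hp⟩
  set v := padicValNat p m with hv
  obtain ⟨u, hu, hpu⟩ : ∃ u, m = p ^ v * u ∧ ¬ p ∣ u := by
    obtain ⟨u, hu⟩ := pow_padicValNat_dvd (p := p) (n := m)
    refine ⟨u, hu, fun hdvd => ?_⟩
    have : p ^ (v + 1) ∣ m := by
      obtain ⟨w, hw⟩ := hdvd
      exact ⟨w, by rw [hu, hw]; ring⟩
    exact pow_succ_padicValNat_not_dvd hm.ne' this
  constructor
  · refine ⟨pow_pos hp.pos v, fun hdvd => hpu ?_⟩
    have := lucas_pow_choose p hp v u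
    rw [← hu] at this
    exact (Nat.modEq_zero_iff_dvd).mp (this.symm.trans ((Nat.modEq_zero_iff_dvd).mpr hdvd))
  · rintro n ⟨hn, hnd⟩
    -- m * C(m-1, n-1) = C(m, n) * n
    have hid : m * (m - 1).choose (n - 1) = m.choose n * n := by
      have := Nat.add_one_mul_choose_eq (m - 1) (n - 1)
      simpa [Nat.succ_eq_add_one, Nat.sub_add_cancel hm, Nat.sub_add_cancel hn] using this
    have hdvd : p ^ v ∣ m.choose n * n := hid ▸ Dvd.dvd.mul_right pow_padicValNat_dvd _
    have hcop : Nat.Coprime (p ^ v) (m.choose n) :=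
      Nat.Coprime.pow_left _ ((Nat.Prime.coprime_iff_not_dvd hp).mpr hnd)
    have : p ^ v ∣ n := (Nat.Coprime.dvd_of_dvd_mul_left hcop hdvd)
    exact Nat.le_of_dvd hn this
end

section
/- Let p be a prime and m a negative integer with v = v_p(m). Then for every integer n with 0 < n < p^v, the generalized binomial coefficient C(m, n) (an integer) is divisible by p. -/
/-- For a prime `p`, a negative integer `m` with `v = v_p(m)`, and `0 < n < p^v`,
the generalized binomial coefficient `C(m, n)` is divisible by `p`. -/
theorem generalized_binom_divisible_neg
    (p : ℕ) (hp : p.Prime) (m : ℤ) (hm : m < 0) (n : ℕ)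
    (hn0 : 0 < n) (hn : n < p ^ padicValInt p m) :
    (p : ℤ) ∣ Ring.choose m n := by
  haveI : Fact p.Prime := ⟨hp⟩
  set v := padicValInt p m with hv
  obtain ⟨n', rfl⟩ : ∃ n', n = n' + 1 := ⟨n - 1, (Nat.succ_pred_eq_of_pos hn0).symm⟩
  -- the key identity : (n'+1) * C(m, n'+1) = m * C(m-1, n')
  have h1 : (descPochhammer ℤ (n' + 1)).eval m
      = ((n' + 1).factorial : ℤ) * Ring.choose m (n' + 1) := by
    rw [Polynomial.eval_eq_smeval, Ring.descPochhammer_eq_factorial_smul_choose,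
      nsmul_eq_mul]
  have h2 : (descPochhammer ℤ n').eval (m - 1)
      = (n'.factorial : ℤ) * Ring.choose (m - 1) n' := by
    rw [Polynomial.eval_eq_smeval, Ring.descPochhammer_eq_factorial_smul_choose,
      nsmul_eq_mul]
  have h3 : (descPochhammer ℤ (n' + 1)).eval m
      = m * (descPochhammer ℤ n').eval (m - 1) := by
    rw [descPochhammer_succ_left]
    simp [Polynomial.eval_comp]
  have key : ((n' + 1 : ℕ) : ℤ) * Ring.choose m (n' + 1)
      = m * Ring.choose (m - 1) n' := by
    have hfac : ((n' + 1).factorial : ℤ) = (n'.factorial : ℤ) * ((n' + 1 : ℕ) : ℤ) := by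
      rw [Nat.factorial_succ]; push_cast; ring
    have := h1.symm.trans (h3.trans (by rw [h2]))
    rw [hfac] at this
    have hne : (n'.factorial : ℤ) ≠ 0 := by
      exact_mod_cast Nat.factorial_ne_zero n'
    apply mul_left_cancel₀ hne
    linear_combination this
  -- p^v divides the right hand side
  have hdvd : (p : ℤ) ^ v ∣ ((n' + 1 : ℕ) : ℤ) * Ring.choose m (n' + 1) := by
    rw [key]
    exact Dvd.dvd.mul_right (padicValInt_dvd m) _
  -- write n'+1 = p^a * u with p ∤ u and a < v
  set a := (n' + 1).factorization p with ha
  have hne : n' + 1 ≠ 0 := Nat.succ_ne_zero n'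
  have hsplit : p ^ a * ((n' + 1) / p ^ a) = n' + 1 := Nat.ordProj_mul_ordCompl_eq_self _ _
  have hu : ¬ p ∣ ((n' + 1) / p ^ a) := Nat.not_dvd_ordCompl hp hne
  have hav : a < v := by
    have h4 : p ^ a ≤ n' + 1 := Nat.ordProj_le p hne
    have h5 : p ^ a < p ^ v := lt_of_le_of_lt h4 hn
    exact (Nat.pow_lt_pow_iff_right hp.one_lt).mp h5
  -- cancel p^a
  have hdvd2 : (p : ℤ) ^ (v - a) ∣ (((n' + 1) / p ^ a : ℕ) : ℤ) * Ring.choose m (n' + 1) := by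
    have hpow : (p : ℤ) ^ v = (p : ℤ) ^ a * (p : ℤ) ^ (v - a) := by
      rw [← pow_add]; congr 1; omega
    have hc : ((n' + 1 : ℕ) : ℤ) = (p : ℤ) ^ a * (((n' + 1) / p ^ a : ℕ) : ℤ) := by
      exact_mod_cast (congrArg (Nat.cast : ℕ → ℤ) hsplit.symm)
    rw [hc, hpow, mul_assoc] at hdvd
    have hpa : ((p : ℤ) ^ a) ≠ 0 := pow_ne_zero _ (by exact_mod_cast hp.ne_zero)
    exact (mul_dvd_mul_iff_left hpa).mp hdvd
  have hpdvd : (p : ℤ) ∣ (((n' + 1) / p ^ a : ℕ) : ℤ) * Ring.choose m (n' + 1) :=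
    dvd_trans (dvd_pow_self (p : ℤ) (by omega)) hdvd2
  have hpprime : Prime (p : ℤ) := Nat.prime_iff_prime_int.mp hp
  rcases hpprime.dvd_mul.mp hpdvd with h | h
  · exact absurd (Int.natCast_dvd_natCast.mp h) hu
  · exact h
end

section
/- Let p be a prime and m any nonzero integer with v = v_p(m). Then the generalized binomial coefficient C(m, p^v) satisfies C(m, p^v) ≡ m / p^v (mod p). -/
open Polynomial

/-- Lucas-type lemma: for any natural `N`, `C(N, p^v) ≡ N / p^v (mod p)`. -/
private lemma lucas_pow_aux (p : ℕ) [Fact p.Prime] (N v : ℕ) :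
    (Nat.choose N (p ^ v) : ℤ) ≡ ((N / p ^ v : ℕ) : ℤ) [ZMOD p] := by
  have hp : p.Prime := Fact.out
  have h := Choose.choose_modEq_choose_mul_prod_range_choose (n := N) (k := p ^ v) (p := p) v
  refine h.trans ?_
  have h1 : p ^ v / p ^ v = 1 := Nat.div_self (pow_pos hp.pos v)
  have h2 : ∀ i ∈ Finset.range v, p ^ v / p ^ i % p = 0 := by
    intro i hi
    rw [Nat.pow_div (Finset.mem_range.mp hi).le hp.pos]
    exact Nat.mod_eq_zero_of_dvd (dvd_pow_self p (Nat.sub_ne_zero_of_lt (Finset.mem_range.mp hi)))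
  have hprod : ∏ i ∈ Finset.range v, Nat.choose (N / p ^ i % p) (p ^ v / p ^ i % p) = 1 := by
    refine Finset.prod_eq_one fun i hi => ?_
    rw [h2 i hi, Nat.choose_zero_right]
  rw [h1, Nat.choose_one_right, hprod, Nat.cast_one, mul_one]

/-- If `m₁ ≡ m₂` modulo a high enough power of `p`, then the generalized binomial
coefficients `C(m₁, n)` and `C(m₂, n)` are congruent mod `p`. -/
private lemma choose_transfer_aux (p : ℕ) (hp : p.Prime) (n : ℕ) (m₁ m₂ : ℤ)
    (h : (p : ℤ) ^ (padicValNat p n.factorial + 1) ∣ m₁ - m₂) :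
    Ring.choose m₁ n ≡ Ring.choose m₂ n [ZMOD p] := by
  set A := padicValNat p n.factorial with hA
  have key : (n.factorial : ℤ) * (Ring.choose m₁ n - Ring.choose m₂ n)
      = (descPochhammer ℤ n).eval m₁ - (descPochhammer ℤ n).eval m₂ := by
    rw [eval_eq_smeval, eval_eq_smeval,
      Ring.descPochhammer_eq_factorial_smul_choose, Ring.descPochhammer_eq_factorial_smul_choose,
      nsmul_eq_mul, nsmul_eq_mul]
    ring
  have hdvd : (p : ℤ) ^ (A + 1) ∣ (n.factorial : ℤ) * (Ring.choose m₁ n - Ring.choose m₂ n) := by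
    rw [key]
    exact h.trans (sub_dvd_eval_sub m₁ m₂ _)
  -- factor `n! = p ^ A * u` with `p ∤ u`
  have hfac0 : n.factorial ≠ 0 := Nat.factorial_ne_zero n
  have hAfac : (n.factorial).factorization p = A := Nat.factorization_def _ hp
  have hu : ¬ p ∣ (n.factorial / p ^ A) := by
    rw [← hAfac]; exact Nat.not_dvd_ordCompl hp hfac0
  have hufac : n.factorial = p ^ A * (n.factorial / p ^ A) := by
    conv_lhs => rw [← Nat.ordProj_mul_ordCompl_eq_self n.factorial p]
    rw [hAfac]
  set u : ℕ := n.factorial / p ^ A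
  rw [hufac] at hdvd
  push_cast at hdvd
  have hpA : ((p : ℤ) ^ A) ≠ 0 := pow_ne_zero _ (by exact_mod_cast hp.ne_zero)
  have hdvd2 : (p : ℤ) ∣ (u : ℤ) * (Ring.choose m₁ n - Ring.choose m₂ n) := by
    have : (p : ℤ) ^ A * (p : ℤ) ∣ (p : ℤ) ^ A * ((u : ℤ) *
        (Ring.choose m₁ n - Ring.choose m₂ n)) := by
      rw [← pow_succ, ← mul_assoc]
      exact hdvd
    exact (mul_dvd_mul_iff_left hpA).mp this
  have hpZ : Prime (p : ℤ) := Nat.prime_iff_prime_int.mp hp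
  have hdvd3 : (p : ℤ) ∣ Ring.choose m₁ n - Ring.choose m₂ n := by
    rcases hpZ.dvd_mul.mp hdvd2 with h' | h'
    · exact absurd (Int.ofNat_dvd.mp (by exact_mod_cast h')) hu
    · exact h'
  exact (Int.modEq_iff_dvd.mpr hdvd3).symm

/-- For a prime `p` and any nonzero integer `m` with `v = v_p(m)`:
`C(m, p^v) ≡ m / p^v (mod p)`. -/
theorem generalized_binom_at_p_pow
    (p : ℕ) (hp : p.Prime) (m : ℤ) (hm : m ≠ 0) :
    Int.ModEq (p : ℤ) (Ring.choose m (p ^ padicValInt p m))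
      (m / (p : ℤ) ^ padicValInt p m) := by
  haveI : Fact p.Prime := ⟨hp⟩
  set v := padicValInt p m with hv
  set n := p ^ v with hn
  set A := padicValNat p n.factorial with hA
  set L := A + v + 1 with hL
  have hdvd_m : (p : ℤ) ^ v ∣ m := padicValInt_dvd m
  have hp1 : (1 : ℤ) ≤ (p : ℤ) := by exact_mod_cast hp.one_lt.le
  set a : ℤ := (m.natAbs : ℤ) with ha
  set N : ℤ := m + (p : ℤ) ^ L * a with hNdef
  have hN0 : 0 ≤ N := by
    rcases le_or_gt 0 m with h | h
    · have : (0 : ℤ) ≤ (p : ℤ) ^ L * m.natAbs := by positivity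
      linarith
    · have habs : a = -m := by rw [ha]; exact_mod_cast Int.ofNat_natAbs_of_nonpos h.le
      have hpL : (1 : ℤ) ≤ (p : ℤ) ^ L := one_le_pow₀ hp1
      rw [hNdef, habs]
      nlinarith
  -- step 1: transfer from m to N
  have step1 : Ring.choose m n ≡ Ring.choose N n [ZMOD p] := by
    refine (choose_transfer_aux p hp n N m ?_).symm
    have : N - m = (p : ℤ) ^ L * a := by rw [hNdef]; ring
    rw [this]
    exact Dvd.dvd.mul_right (pow_dvd_pow _ (by omega)) _
  -- step 2: N as a natural number
  have hNtoNat : ((N.toNat : ℤ)) = N := Int.toNat_of_nonneg hN0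
  have step2 : Ring.choose N n = (Nat.choose N.toNat n : ℤ) := by
    conv_lhs => rw [← hNtoNat]
    rw [Ring.choose_natCast]
  -- step 3: Lucas
  have step3 : (Nat.choose N.toNat n : ℤ) ≡ ((N.toNat / n : ℕ) : ℤ) [ZMOD p] :=
    lucas_pow_aux p N.toNat v
  -- step 4: nat division to int division
  have step4 : ((N.toNat / n : ℕ) : ℤ) = N / (p : ℤ) ^ v := by
    rw [Int.natCast_div, hNtoNat, hn]
    push_cast
    ring
  -- step 5: N / p^v ≡ m / p^v mod p
  have step5 : N / (p : ℤ) ^ v ≡ m / (p : ℤ) ^ v [ZMOD p] := by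
    obtain ⟨c, hc⟩ := hdvd_m
    have hLv : (p : ℤ) ^ L = (p : ℤ) ^ v * (p : ℤ) ^ (L - v) := by
      rw [← pow_add]
      congr 1
      omega
    have hpv : ((p : ℤ) ^ v) ≠ 0 := pow_ne_zero _ (by exact_mod_cast hp.ne_zero)
    have hNeq : N = (p : ℤ) ^ v * (c + (p : ℤ) ^ (L - v) * a) := by
      rw [hNdef, hLv]
      nth_rewrite 1 [hc]
      ring
    rw [hNeq, hc, Int.mul_ediv_cancel_left _ hpv, Int.mul_ediv_cancel_left _ hpv]
    have hX : (p : ℤ) ∣ (p : ℤ) ^ (L - v) * a :=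
      Dvd.dvd.mul_right (dvd_pow_self _ (by omega)) _
    calc c + (p : ℤ) ^ (L - v) * a ≡ c + 0 [ZMOD p] :=
          Int.ModEq.add_left c ((Int.modEq_zero_iff_dvd).mpr hX)
      _ = c := by ring
  calc Ring.choose m n ≡ Ring.choose N n [ZMOD p] := step1
    _ = (Nat.choose N.toNat n : ℤ) := step2
    _ ≡ ((N.toNat / n : ℕ) : ℤ) [ZMOD p] := step3
    _ = N / (p : ℤ) ^ v := step4
    _ ≡ m / (p : ℤ) ^ v [ZMOD p] := step5
end

section
/- Let K be a field of characteristic p > 0 complete with respect to a discrete valuation v, let m be a nonzero integer, and let a ∈ K with v(a) > 0. Then (1+a)^m ≡ 1 + (m/p^{v_p(m)})·a^{p^{v_p(m)}} modulo elements of valuation strictly greater than p^{v_p(m)}·v(a), where (1+a)^m is defined by the convergent binomial series ∑_{n≥0} C(m,n) a^n (with C(m,n) interpreted in K via reduction mod p). -/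
open Multiplicative WithZero

section Aux

variable {p : ℕ} {K : Type*} [Field K]
  [Valued K (WithZero (Multiplicative ℤ))]

private lemma aux_v_nat (n : ℕ) : Valued.v (n : K) ≤ 1 := by
  induction n with
  | zero => simp
  | succ n ih =>
    push_cast
    calc Valued.v ((n : K) + 1) ≤ max (Valued.v (n : K)) (Valued.v (1 : K)) :=
          Valuation.map_add _ _ _
      _ ≤ 1 := by simp [ih]

private lemma aux_v_int (u : ℤ) : Valued.v (u : K) ≤ 1 := by
  rcases Int.natAbs_eq u with h | h
  · rw [h, Int.cast_natCast]; exact aux_v_nat _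
  · rw [h, Int.cast_neg, Int.cast_natCast, Valuation.map_neg]; exact aux_v_nat _

private lemma aux_nat (b : K) (hb : Valued.v b < 1) (n : ℕ) :
    Valued.v ((1 + b) ^ n - 1 - (n : K) * b) ≤ Valued.v b ^ 2 := by
  induction n with
  | zero => simp
  | succ n ih =>
    have key : (1 + b) ^ (n + 1) - 1 - ((n : K) + 1) * b
        = ((1 + b) ^ n - 1 - (n : K) * b) * (1 + b) + (n : K) * b ^ 2 := by ring
    push_cast
    rw [key]
    refine le_trans (Valuation.map_add _ _ _) (max_le ?_ ?_)
    · rw [Valuation.map_mul, Valuation.map_one_add_of_lt _ hb, mul_one]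
      exact ih
    · rw [Valuation.map_mul, Valuation.map_pow]
      calc Valued.v (n : K) * Valued.v b ^ 2 ≤ 1 * Valued.v b ^ 2 :=
            mul_le_mul' (aux_v_nat n) le_rfl
        _ = Valued.v b ^ 2 := one_mul _

private lemma aux_int (b : K) (hb : Valued.v b < 1) (u : ℤ) :
    Valued.v ((1 + b) ^ u - 1 - (u : K) * b) ≤ Valued.v b ^ 2 := by
  have h1b : Valued.v (1 + b) = 1 := Valuation.map_one_add_of_lt _ hb
  have h1b0 : (1 + b) ≠ 0 := by
    intro h; rw [h] at h1b; simp at h1b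
  rcases Int.natAbs_eq u with h | h
  · rw [h, zpow_natCast, Int.cast_natCast]
    exact aux_nat b hb _
  · set n := u.natAbs with hn
    rw [h]
    have hXz : (1 + b) ^ (-(n : ℤ)) = ((1 + b) ^ n)⁻¹ := by
      rw [zpow_neg, zpow_natCast]
    rw [hXz]
    set X := (1 + b) ^ n with hX
    have hXv : Valued.v X = 1 := by rw [hX, Valuation.map_pow, h1b, one_pow]
    have hX0 : X ≠ 0 := by intro h'; rw [h'] at hXv; simp at hXv
    set E := X - 1 - (n : K) * b with hE
    have hEv : Valued.v E ≤ Valued.v b ^ 2 := aux_nat b hb n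
    have h1nb : Valued.v (1 - (n : K) * b) = 1 := by
      rw [sub_eq_add_neg]
      refine Valuation.map_one_add_of_lt _ ?_
      rw [Valuation.map_neg, Valuation.map_mul]
      calc Valued.v (n : K) * Valued.v b ≤ 1 * Valued.v b :=
            mul_le_mul' (aux_v_nat n) le_rfl
        _ = Valued.v b := one_mul _
        _ < 1 := hb
    have key : X⁻¹ - 1 - ((-(n : ℤ) : ℤ) : K) * b
        = X⁻¹ * ((n : K) ^ 2 * b ^ 2 - E * (1 - (n : K) * b)) := by
      rw [hE]
      field_simp
      push_cast
      ring
    rw [key, Valuation.map_mul, map_inv₀, hXv, inv_one, one_mul]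
    refine le_trans (Valuation.map_sub _ _ _) (max_le ?_ ?_)
    · rw [Valuation.map_mul, Valuation.map_pow, Valuation.map_pow]
      calc Valued.v (n : K) ^ 2 * Valued.v b ^ 2 ≤ 1 ^ 2 * Valued.v b ^ 2 :=
            mul_le_mul' (pow_le_pow_left' (aux_v_nat n) 2) le_rfl
        _ = Valued.v b ^ 2 := by rw [one_pow, one_mul]
    · rw [Valuation.map_mul, h1nb, mul_one]
      exact hEv

end Aux

/-- Let `K` be a complete discretely valued field of characteristic `p > 0`,
`m` a nonzero integer, and `a ∈ K` with positive valuation.  Then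
`(1+a)^m ≡ 1 + (m / p^{v_p(m)}) · a^{p^{v_p(m)}}` modulo elements of valuation
strictly greater than `p^{v_p(m)} · v(a)`.  (In characteristic `p`, the
convergent binomial series for `(1+a)^m` sums to the `zpow` `(1+a)^m`.) -/
theorem one_add_pow_zpow_congr_charP
    (p : ℕ) (hp : p.Prime) (K : Type*) [Field K] [CharP K p]
    [Valued K (WithZero (Multiplicative ℤ))] [CompleteSpace K]
    (π : K) (hπ : Valued.v π = ((ofAdd (-1 : ℤ) : Multiplicative ℤ) : WithZero (Multiplicative ℤ)))
    (m : ℤ) (hm : m ≠ 0) (a : K) (ha0 : a ≠ 0) (ha : Valued.v a < 1) :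
    Valued.v ((1 + a) ^ m - 1 -
        ((m / (p : ℤ) ^ padicValInt p m : ℤ) : K) * a ^ (p ^ padicValInt p m))
      < Valued.v a ^ (p ^ padicValInt p m) := by
  haveI : Fact p.Prime := ⟨hp⟩
  set k := padicValInt p m with hk
  set u := m / (p : ℤ) ^ k with hu
  have hdvd : (p : ℤ) ^ k ∣ m := padicValInt_dvd m
  have hmeq : m = (p ^ k : ℕ) * u := by
    push_cast
    rw [hu]
    exact (Int.mul_ediv_cancel' hdvd).symm
  have h1a : Valued.v (1 + a) = 1 := Valuation.map_one_add_of_lt _ ha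
  have h1a0 : (1 + a) ≠ 0 := by intro h; rw [h] at h1a; simp at h1a
  set b := a ^ (p ^ k) with hb
  have hbv : Valued.v b = Valued.v a ^ (p ^ k) := by rw [hb, Valuation.map_pow]
  have hbne : Valued.v b ≠ 0 := by
    simp [hbv, pow_ne_zero, (Valuation.ne_zero_iff _).mpr ha0]
  have hblt : Valued.v b < 1 := by
    rw [hbv]
    have hk0 : p ^ k ≠ 0 := pow_ne_zero _ hp.pos.ne'
    calc Valued.v a ^ p ^ k < 1 ^ p ^ k := by
          refine pow_lt_pow_left₀ ha zero_le' hk0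
      _ = 1 := one_pow _
  -- rewrite the zpow
  have hfrob : (1 + a) ^ (p ^ k) = 1 + b := by
    rw [hb, add_pow_char_pow, one_pow]
  have hzpow : (1 + a) ^ m = (1 + b) ^ u := by
    rw [hmeq, ← hfrob]
    set x := Units.mk0 (1 + a) h1a0 with hx
    have hxv : ((x : K)) = 1 + a := rfl
    calc (1 + a) ^ (((p ^ k : ℕ) : ℤ) * u) = ((x : K)) ^ (((p ^ k : ℕ) : ℤ) * u) := by rw [hxv]
      _ = ((x ^ (((p ^ k : ℕ) : ℤ) * u) : Kˣ) : K) := (Units.val_zpow_eq_zpow_val _ _).symm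
      _ = (((x ^ ((p ^ k : ℕ) : ℤ)) ^ u : Kˣ) : K) := by rw [zpow_mul]
      _ = ((x ^ ((p ^ k : ℕ) : ℤ) : Kˣ) : K) ^ u := Units.val_zpow_eq_zpow_val _ _
      _ = (((x : K)) ^ ((p ^ k : ℕ) : ℤ)) ^ u := by rw [Units.val_zpow_eq_zpow_val]
      _ = ((1 + a) ^ (p ^ k : ℕ)) ^ u := by rw [hxv, zpow_natCast]
  rw [hzpow, ← hbv]
  calc Valued.v ((1 + b) ^ u - 1 - (u : K) * b) ≤ Valued.v b ^ 2 := aux_int b hblt u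
    _ = Valued.v b * Valued.v b := sq _
    _ < Valued.v b := mul_lt_of_lt_one_left (zero_lt_iff.mpr hbne) hblt
end

section
/- Let F/K be a finite Galois totally ramified extension of complete discrete valuation fields with residue characteristic p > 0, with Galois group G and normalized valuation v_F on F. Let σ ∈ G_1 (the first ramification group), and let f ∈ F be nonzero with v_F(f) nonzero and coprime to p. Then v_F(σ(f) − f) = v_F(f) + i_G(σ), where i_G(σ) = v_F((σ(π_F) − π_F)/π_F) for a uniformizer π_F of F. -/
open Multiplicative WithZero

namespace ValWildAux

abbrev oz (m : ℤ) : WithZero (Multiplicative ℤ) := ((ofAdd m : Multiplicative ℤ) : WithZero (Multiplicative ℤ))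

lemma oz_mul (a b : ℤ) : oz a * oz b = oz (a + b) := by
  rw [← WithZero.coe_mul, ← ofAdd_add]

lemma oz_le {a b : ℤ} : oz a ≤ oz b ↔ a ≤ b := by
  rw [WithZero.coe_le_coe, Multiplicative.ofAdd_le]

lemma oz_lt {a b : ℤ} : oz a < oz b ↔ a < b := by
  rw [WithZero.coe_lt_coe, Multiplicative.ofAdd_lt]

lemma oz_inj {a b : ℤ} : oz a = oz b ↔ a = b := by simp

lemma oz_ne_zero (a : ℤ) : oz a ≠ 0 := WithZero.coe_ne_zero

lemma oz_zero : oz 0 = 1 := rfl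

lemma oz_zpow (a n : ℤ) : (oz a) ^ n = oz (a * n) := by
  rw [← WithZero.coe_zpow]
  congr 1
  rw [← ofAdd_zsmul, smul_eq_mul, mul_comm]

lemma one_le_of_neg_one_lt {u : WithZero (Multiplicative ℤ)} (h : oz (-1) < u) : 1 ≤ u := by
  induction u using WithZero.recZeroCoe with
  | zero => exact absurd h (by simp)
  | coe m =>
    rw [← oz_zero, WithZero.coe_le_coe]
    rw [WithZero.coe_lt_coe] at h
    have : (-1 : ℤ) < toAdd m := h
    have : (0:ℤ) ≤ toAdd m := by omega
    exact this

variable {F : Type*} [Field F] [Valued F (WithZero (Multiplicative ℤ))]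

local notation "v" => (Valued.v : Valuation F (WithZero (Multiplicative ℤ)))

lemma int_val_le_one (n : ℤ) : v (n : F) ≤ 1 := by
  induction n using Int.induction_on with
  | zero => simp
  | succ k ih =>
    push_cast at ih ⊢
    exact le_trans (Valuation.map_add _ _ _) (by simp [ih])
  | pred k ih =>
    push_cast at ih ⊢
    refine le_trans (Valuation.map_sub _ _ _) ?_
    simp only [max_le_iff]
    exact ⟨ih, by simp⟩

lemma int_val_eq_one {p : ℕ} (hp : p.Prime) (hres : v (p : F) < 1)
    {n : ℤ} (h : ¬ (p:ℤ) ∣ n) : v (n : F) = 1 := by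
  have hcop : IsCoprime (p : ℤ) n := by
    rw [Int.isCoprime_iff_gcd_eq_one]
    rcases Nat.coprime_or_dvd_of_prime hp n.natAbs with h1 | h1
    · rwa [Int.gcd]
    · exact absurd (Int.natAbs_dvd_natAbs.mp (by simpa using h1)) h
  obtain ⟨a, b, hab⟩ := hcop
  have h1 : ((a * p + b * n : ℤ) : F) = 1 := by rw [hab]; push_cast; ring
  have hap : v ((a : F) * (p : F)) < 1 := by
    rw [Valuation.map_mul]
    calc v (a:F) * v (p:F) ≤ 1 * v (p:F) := mul_le_mul_left (int_val_le_one a) _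
    _ = v (p:F) := one_mul _
    _ < 1 := hres
  have hbn : v ((b : F) * (n : F)) ≤ v (n : F) := by
    rw [Valuation.map_mul]
    calc v (b:F) * v (n:F) ≤ 1 * v (n:F) := mul_le_mul_left (int_val_le_one b) _
    _ = v (n:F) := one_mul _
  have : (1 : WithZero (Multiplicative ℤ)) ≤ max (v ((a:F)*(p:F))) (v ((b:F)*(n:F))) := by
    have := Valuation.map_add v ((a:F)*(p:F)) ((b:F)*(n:F))
    have he : ((a:F)*(p:F)) + ((b:F)*(n:F)) = 1 := by push_cast at h1 ⊢; linear_combination h1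
    rw [he, Valuation.map_one] at this
    exact this
  rcases max_cases (v ((a:F)*(p:F))) (v ((b:F)*(n:F))) with ⟨heq, _⟩ | ⟨heq, _⟩
  · rw [heq] at this; exact absurd this (not_le_of_gt hap)
  · rw [heq] at this
    exact le_antisymm (int_val_le_one n) (le_trans this hbn)

lemma pow_sub_one_val_nat {x : F} (hx : v (x - 1) < 1) (k : ℕ) : v (x ^ k - 1) < 1 := by
  induction k with
  | zero => simpa using zero_lt_one
  | succ k ih =>
    have : x ^ (k+1) - 1 = x * (x ^ k - 1) + (x - 1) := by ring
    rw [this]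
    have hvx : v x = 1 := by
      have := Valuation.map_eq_of_sub_lt v (x := (1:F)) (y := x) (by simpa using hx)
      simpa using this
    refine lt_of_le_of_lt (Valuation.map_add _ _ _) ?_
    rw [max_lt_iff]
    exact ⟨by rw [Valuation.map_mul, hvx, one_mul]; exact ih, hx⟩

lemma zpow_sub_one_val {p : ℕ} (hp : p.Prime) (hres : v (p : F) < 1)
    {x : F} (hx : v (x - 1) < 1) {n : ℤ} (hn : ¬ (p:ℤ) ∣ n) :
    v (x ^ n - 1) = v (x - 1) := by
  have hvx : v x = 1 := by
    have := Valuation.map_eq_of_sub_lt v (x := (1:F)) (y := x) (by simpa using hx)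
    simpa using this
  have hx0 : x ≠ 0 := fun h => by simp [h] at hvx
  -- natural case
  have hnat : ∀ m : ℕ, ¬ (p:ℤ) ∣ (m:ℤ) → v (x ^ m - 1) = v (x - 1) := by
    intro m hm
    have hgs : v (∑ k ∈ Finset.range m, x ^ k) = 1 := by
      have hsplit : ∑ k ∈ Finset.range m, x ^ k = (m : F) + ∑ k ∈ Finset.range m, (x ^ k - 1) := by
        rw [Finset.sum_sub_distrib]; simp
      rw [hsplit]
      have hvm : v ((m:ℤ) : F) = 1 := int_val_eq_one hp hres hm
      push_cast at hvm
      rw [Valuation.map_add_eq_of_lt_left, hvm]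
      rw [hvm]
      exact Valuation.map_sum_lt _ one_ne_zero (fun k _ => pow_sub_one_val_nat hx k)
    have := geom_sum_mul x m
    calc v (x ^ m - 1) = v ((∑ k ∈ Finset.range m, x ^ k) * (x - 1)) := by rw [this]
    _ = v (x - 1) := by rw [Valuation.map_mul, hgs, one_mul]
  rcases Int.eq_nat_or_neg n with ⟨m, rfl | rfl⟩
  · rw [zpow_natCast]; exact hnat m hn
  · have hm : ¬ (p:ℤ) ∣ (m:ℤ) := fun h => hn (by simpa using h.neg_right)
    have hxm : x ^ (-(m:ℤ)) - 1 = -(x ^ (-(m:ℤ))) * (x ^ m - 1) := by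
      rw [zpow_neg, zpow_natCast]
      field_simp
      ring
    rw [hxm, Valuation.map_mul, Valuation.map_neg]
    have : v (x ^ (-(m:ℤ))) = 1 := by
      rw [map_zpow₀, hvx, one_zpow]
    rw [this, one_mul]
    exact hnat m hm

variable {K : Type*} [Field K] [Algebra K F] [FiniteDimensional K F]

lemma residue_approx
    (htot : ∀ x : K, x ≠ 0 → ∃ n : ℤ,
      v (algebraMap K F x) = oz (-(n * (Module.finrank K F : ℤ))))
    (π : F) (hπ : v π = oz (-1))
    (a : F) (ha : v a ≤ 1) :
    ∃ x : K, v (a - algebraMap K F x) ≤ oz (-1) := by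
  classical
  by_contra hcon
  push_neg at hcon
  have hge : ∀ x : K, 1 ≤ v (a - algebraMap K F x) :=
    fun x => one_le_of_neg_one_lt (hcon x)
  -- Claim C : valuation of x' + y' * a is the max
  have hC : ∀ x y : K, v (algebraMap K F x + algebraMap K F y * a)
      = max (v (algebraMap K F x)) (v (algebraMap K F y)) := by
    intro x y
    rcases eq_or_ne y 0 with rfl | hy
    · simp
    have hy' : algebraMap K F y ≠ 0 := (map_ne_zero _).mpr hy
    set z : K := -x / y with hz
    have hkey : algebraMap K F x + algebraMap K F y * a
        = algebraMap K F y * (a - algebraMap K F z) := by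
      rw [hz, map_div₀, map_neg]
      field_simp
      ring
    have hxz : v (algebraMap K F x) = v (algebraMap K F y) * v (algebraMap K F z) := by
      have : algebraMap K F x = -(algebraMap K F y * algebraMap K F z) := by
        rw [hz, map_div₀, map_neg]; field_simp
      rw [this, Valuation.map_neg, Valuation.map_mul]
    rcases le_or_gt (v (algebraMap K F z)) 1 with hz1 | hz1
    · have h1 : v (a - algebraMap K F z) = 1 := by
        refine le_antisymm ?_ (hge z)
        refine le_trans (Valuation.map_sub _ _ _) ?_
        simp only [max_le_iff]
        exact ⟨ha, hz1⟩
      rw [hkey, Valuation.map_mul, h1, mul_one]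
      have : v (algebraMap K F x) ≤ v (algebraMap K F y) := by
        rw [hxz]
        calc v (algebraMap K F y) * v (algebraMap K F z) ≤ v (algebraMap K F y) * 1 :=
          mul_le_mul_right hz1 _
        _ = _ := mul_one _
      rw [max_eq_right this]
    · have h1 : v (a - algebraMap K F z) = v (algebraMap K F z) :=
        Valuation.map_sub_eq_of_lt_right _ (lt_of_le_of_lt ha hz1)
      rw [hkey, Valuation.map_mul, h1, ← hxz]
      have : v (algebraMap K F y) ≤ v (algebraMap K F x) := by
        rw [hxz]
        calc v (algebraMap K F y) = v (algebraMap K F y) * 1 := (mul_one _).symm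
        _ ≤ v (algebraMap K F y) * v (algebraMap K F z) := mul_le_mul_right (le_of_lt hz1) _
      rw [max_eq_left this]
  -- linear dependence
  set n := Module.finrank K F with hn
  have hn1 : 1 ≤ n := Module.finrank_pos
  set w : Fin n ⊕ Fin n → F := Sum.elim (fun j => π ^ (j:ℕ)) (fun j => a * π ^ (j:ℕ)) with hw
  have hni : ¬ LinearIndependent K w := by
    intro hW
    have := hW.fintype_card_le_finrank
    simp only [Fintype.card_sum, Fintype.card_fin, ← hn] at this
    omega
  obtain ⟨g, hsum, i0, hgi0⟩ := Fintype.not_linearIndependent_iff.mp hni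
  set cc : Fin n → F := fun j =>
    algebraMap K F (g (Sum.inl j)) + algebraMap K F (g (Sum.inr j)) * a with hcc
  set term : Fin n → F := fun j => cc j * π ^ (j:ℕ) with hterm
  have hsum2 : ∑ j : Fin n, term j = 0 := by
    rw [Fintype.sum_sum_type] at hsum
    rw [← hsum, ← Finset.sum_add_distrib]
    refine Finset.sum_congr rfl (fun j _ => ?_)
    simp only [hterm, hcc, hw, Sum.elim_inl, Sum.elim_inr, Algebra.smul_def]
    ring
  have hπ0 : π ≠ 0 := by
    intro h
    rw [h] at hπ
    simp at hπ
  -- valuation of each nonzero term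
  have hval : ∀ j : Fin n, cc j ≠ 0 → ∃ m : ℤ, v (term j) = oz (-(m * n + j)) := by
    intro j hjne
    have hvc : v (cc j) = max (v (algebraMap K F (g (Sum.inl j)))) (v (algebraMap K F (g (Sum.inr j)))) :=
      hC _ _
    have hvπj : v ((π : F) ^ (j:ℕ)) = oz (-(j:ℤ)) := by
      rw [Valuation.map_pow, hπ]
      rw [← WithZero.coe_pow]
      congr 1
      rw [← ofAdd_nsmul]
      congr 1
      simp
    have hmaxne : max (v (algebraMap K F (g (Sum.inl j)))) (v (algebraMap K F (g (Sum.inr j)))) ≠ 0 := by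
      rw [← hvc]
      simpa using hjne
    have : ∃ m : ℤ, v (cc j) = oz (-(m * n)) := by
      rcases max_cases (v (algebraMap K F (g (Sum.inl j)))) (v (algebraMap K F (g (Sum.inr j)))) with
        ⟨heq, _⟩ | ⟨heq, _⟩ <;> rw [heq] at hvc hmaxne
      · have hne : g (Sum.inl j) ≠ 0 := by
          intro h; rw [h] at hmaxne; simp at hmaxne
        obtain ⟨m, hm⟩ := htot _ hne
        exact ⟨m, by rw [hvc, hm]⟩
      · have hne : g (Sum.inr j) ≠ 0 := by
          intro h; rw [h] at hmaxne; simp at hmaxne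
        obtain ⟨m, hm⟩ := htot _ hne
        exact ⟨m, by rw [hvc, hm]⟩
    obtain ⟨m, hm⟩ := this
    refine ⟨m, ?_⟩
    rw [hterm]
    simp only
    rw [Valuation.map_mul, hm, hvπj, oz_mul]
    congr 1
    ring
  -- distinct valuations
  have hinj : ∀ j j' : Fin n, cc j ≠ 0 → cc j' ≠ 0 → j ≠ j' → v (term j) ≠ v (term j') := by
    intro j j' hj hj' hne heq
    obtain ⟨m, hm⟩ := hval j hj
    obtain ⟨m', hm'⟩ := hval j' hj'
    rw [hm, hm'] at heq
    have hoz : ∀ u u' : ℤ, oz u = oz u' → u = u' := by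
      intro u u' h; simpa using h
    have : (m * n + j : ℤ) = m' * n + j' := by
      have := hoz _ _ heq
      omega
    have hj1 : (j:ℤ) < n := by exact_mod_cast j.isLt
    have hj2 : (j':ℤ) < n := by exact_mod_cast j'.isLt
    have hj3 : (0:ℤ) ≤ j := Int.ofNat_nonneg _
    have hj4 : (0:ℤ) ≤ j' := Int.ofNat_nonneg _
    have hdvd : (j:ℤ) - j' = (m' - m) * n := by linarith
    have : j = j' := by
      rcases lt_trichotomy (m' - m) 0 with h | h | h
      · exfalso; nlinarith
      · rw [h, zero_mul] at hdvd
        exact Fin.ext (by omega)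
      · exfalso; nlinarith
    exact hne this
  -- nonzero term exists
  have hterm0 : ∀ j, cc j = 0 → g (Sum.inl j) = 0 ∧ g (Sum.inr j) = 0 := by
    intro j h
    have h2 : max (v (algebraMap K F (g (Sum.inl j)))) (v (algebraMap K F (g (Sum.inr j)))) = 0 := by
      rw [← hC (g (Sum.inl j)) (g (Sum.inr j))]
      change v (cc j) = 0
      rw [h, Valuation.map_zero]
    constructor
    · have : v (algebraMap K F (g (Sum.inl j))) = 0 :=
        le_antisymm (h2 ▸ le_max_left _ _) zero_le'
      exact (map_eq_zero _).mp ((Valuation.zero_iff _).mp this)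
    · have : v (algebraMap K F (g (Sum.inr j))) = 0 :=
        le_antisymm (h2 ▸ le_max_right _ _) zero_le'
      exact (map_eq_zero _).mp ((Valuation.zero_iff _).mp this)
  -- a nonzero term exists
  have hex : ∃ j : Fin n, cc j ≠ 0 := by
    rcases i0 with j | j
    · exact ⟨j, fun h => hgi0 (hterm0 j h).1⟩
    · exact ⟨j, fun h => hgi0 (hterm0 j h).2⟩
  -- maximize the valuation over nonzero terms
  set T : Finset (Fin n) := Finset.univ.filter (fun j => cc j ≠ 0) with hT
  have hTne : T.Nonempty := by
    obtain ⟨j, hj⟩ := hex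
    exact ⟨j, by simp [hT, hj]⟩
  obtain ⟨jm, hjmT, hjm⟩ := T.exists_max_image (fun j => v (term j)) hTne
  have hjmcc : cc jm ≠ 0 := by
    simpa [hT] using hjmT
  have hjm0 : v (term jm) ≠ 0 := by
    simp only [hterm]
    rw [Valuation.map_mul]
    simp [hjmcc, hπ0, (Valuation.zero_iff _).ne]
  have hfin : v (∑ j : Fin n, term j) = v (term jm) := by
    refine Valuation.map_sum_eq_of_lt _ (Finset.mem_univ jm) ?_
    intro j hj
    have hjne : j ≠ jm := by
      simp only [Finset.mem_sdiff, Finset.mem_singleton] at hj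
      exact hj.2
    rcases eq_or_ne (cc j) 0 with h0 | h0
    · have : term j = 0 := by simp [hterm, h0]
      rw [this, Valuation.map_zero]
      exact zero_lt_iff.mpr hjm0
    · have hle : v (term j) ≤ v (term jm) := hjm j (by simp [hT, h0])
      exact lt_of_le_of_ne hle (hinj j jm h0 hjmcc hjne)
  rw [hsum2, Valuation.map_zero] at hfin
  exact hjm0 hfin.symm


lemma sigma_approx
    (htot : ∀ x : K, x ≠ 0 → ∃ n : ℤ,
      v (algebraMap K F x) = oz (-(n * (Module.finrank K F : ℤ))))
    (π : F) (hπ : v π = oz (-1))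
    (σ : F ≃ₐ[K] F) (hσ : ∀ y : F, v (σ y) = v y) (i : ℤ)
    (hiv : v (σ π - π) ≤ oz (-(1+i))) :
    ∀ N : ℕ, ∀ a : F, v a ≤ 1 →
      ∃ s : F, v (a - s) ≤ oz (-(N:ℤ)) ∧ v s ≤ 1 ∧ v (σ s - s) ≤ oz (-(1+i)) := by
  have hπ0 : π ≠ 0 := by
    intro h; rw [h] at hπ; simp at hπ
  intro N
  induction N with
  | zero =>
    intro a ha
    refine ⟨0, ?_, by simp, by simp⟩
    simpa [oz_zero] using ha
  | succ N ih =>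
    intro a ha
    obtain ⟨x, hx⟩ := residue_approx htot π hπ a ha
    set b : F := (a - algebraMap K F x) / π with hb
    have hbπ : b * π = a - algebraMap K F x := div_mul_cancel₀ _ hπ0
    have hvb : v b ≤ 1 := by
      have h1 : v b * oz (-1) ≤ oz (-1) := by
        rw [← hπ, ← Valuation.map_mul, hbπ, hπ]
        exact hx
      have h2 : v b * (oz (-1) * oz 1) ≤ oz (-1) * oz 1 := by
        rw [← mul_assoc]; exact mul_le_mul_left h1 _
      rw [oz_mul] at h2
      norm_num at h2
      exact h2
    obtain ⟨s', hs1, hs2, hs3⟩ := ih b hvb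
    refine ⟨algebraMap K F x + π * s', ?_, ?_, ?_⟩
    · have heq : a - (algebraMap K F x + π * s') = π * (b - s') := by
        rw [mul_sub, mul_comm π b, hbπ]; ring
      rw [heq, Valuation.map_mul, hπ]
      calc oz (-1) * v (b - s') ≤ oz (-1) * oz (-(N:ℤ)) := mul_le_mul_right hs1 _
      _ = oz (-((N:ℕ)+1:ℕ)) := by rw [oz_mul]; congr 1; push_cast; ring
    · refine le_trans (Valuation.map_add _ _ _) ?_
      simp only [max_le_iff]
      constructor
      · have : algebraMap K F x = a - (a - algebraMap K F x) := by ring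
        rw [this]
        refine le_trans (Valuation.map_sub _ _ _) ?_
        simp only [max_le_iff]
        exact ⟨ha, le_trans hx (by rw [← oz_zero]; exact oz_le.mpr (by omega))⟩
      · rw [Valuation.map_mul, hπ]
        calc oz (-1) * v s' ≤ oz (-1) * 1 := mul_le_mul_right hs2 _
        _ = oz (-1) := mul_one _
        _ ≤ 1 := by rw [← oz_zero]; exact oz_le.mpr (by omega)
    · have heq : σ (algebraMap K F x + π * s') - (algebraMap K F x + π * s')
          = σ π * (σ s' - s') + s' * (σ π - π) := by
        rw [map_add, map_mul, AlgEquiv.commutes]; ring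
      rw [heq]
      refine le_trans (Valuation.map_add _ _ _) ?_
      simp only [max_le_iff]
      constructor
      · rw [Valuation.map_mul, hσ, hπ]
        calc oz (-1) * v (σ s' - s') ≤ oz (-1) * oz (-(1+i)) := mul_le_mul_right hs3 _
        _ = oz (-1 + -(1+i)) := oz_mul _ _
        _ ≤ oz (-(1+i)) := oz_le.mpr (by omega)
      · rw [Valuation.map_mul]
        calc v s' * v (σ π - π) ≤ 1 * v (σ π - π) := mul_le_mul_left hs2 _
        _ = v (σ π - π) := one_mul _
        _ ≤ oz (-(1+i)) := hiv

lemma sigma_sub_le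
    (htot : ∀ x : K, x ≠ 0 → ∃ n : ℤ,
      v (algebraMap K F x) = oz (-(n * (Module.finrank K F : ℤ))))
    (π : F) (hπ : v π = oz (-1))
    (σ : F ≃ₐ[K] F) (hσ : ∀ y : F, v (σ y) = v y) (i : ℤ) (hi0 : 0 ≤ i)
    (hiv : v (σ π - π) ≤ oz (-(1+i))) (a : F) (ha : v a ≤ 1) :
    v (σ a - a) ≤ oz (-(1+i)) := by
  obtain ⟨s, h1, h2, h3⟩ := sigma_approx htot π hπ σ hσ i hiv (1+i).toNat a ha
  have hNat : (((1+i).toNat : ℕ) : ℤ) = 1 + i := Int.toNat_of_nonneg (by omega)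
  have hkey : σ a - a = (σ (a - s) - (a - s)) + (σ s - s) := by
    rw [map_sub]; ring
  rw [hkey]
  refine le_trans (Valuation.map_add _ _ _) ?_
  simp only [max_le_iff]
  refine ⟨?_, h3⟩
  refine le_trans (Valuation.map_sub _ _ _) ?_
  simp only [max_le_iff]
  rw [hσ]
  rw [hNat] at h1
  exact ⟨h1, h1⟩

end ValWildAux

open ValWildAux

/-- **Key lemma.** Let `F/K` be a finite Galois totally ramified extension of
complete discrete valuation fields with residue characteristic `p > 0`, let
`σ ∈ G₁` (the first ramification group, with `i_G(σ) = i ≥ 1`, i.e.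
`v_F(σ π - π) = 1 + i`), and let `f ∈ F` be nonzero with `v_F(f) = c` nonzero
and coprime to `p`.  Then `v_F(σ(f) - f) = v_F(f) + i_G(σ)`.
(The valuation is written multiplicatively: `v_F(x) = n` means
`Valued.v x = ofAdd (-n)`, with uniformizer `π` of valuation `1`.) -/
theorem val_sigma_sub_of_wild
    (p : ℕ) (hp : p.Prime) (K F : Type*) [Field K] [Field F] [Algebra K F]
    [FiniteDimensional K F] [IsGalois K F]
    [Valued F (WithZero (Multiplicative ℤ))] [CompleteSpace F]
    (π : F)
    (hπ : Valued.v π = ((ofAdd (-1 : ℤ) : Multiplicative ℤ) : WithZero (Multiplicative ℤ)))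
    -- the residue field has characteristic `p`
    (hres : Valued.v (p : F) < 1)
    -- `F/K` is totally ramified: the value group of `K` is `[F : K] · ℤ`
    (htot : ∀ x : K, x ≠ 0 → ∃ n : ℤ,
      Valued.v (algebraMap K F x) =
        ((ofAdd (-(n * (Module.finrank K F : ℤ))) : Multiplicative ℤ) : WithZero (Multiplicative ℤ)))
    -- Galois automorphisms preserve the valuation
    (hinv : ∀ (τ : F ≃ₐ[K] F) (x : F), Valued.v (τ x) = Valued.v x)
    (σ : F ≃ₐ[K] F) (i : ℤ)
    (hi : Valued.v (σ π - π) =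
      ((ofAdd (-(1 + i)) : Multiplicative ℤ) : WithZero (Multiplicative ℤ)))
    (hσG1 : 1 ≤ i)
    (f : F) (hf : f ≠ 0) (c : ℤ)
    (hvf : Valued.v f = ((ofAdd (-c) : Multiplicative ℤ) : WithZero (Multiplicative ℤ)))
    (hc0 : c ≠ 0) (hcp : ¬ (p : ℤ) ∣ c) :
    Valued.v (σ f - f) =
      ((ofAdd (-(c + i)) : Multiplicative ℤ) : WithZero (Multiplicative ℤ)) := by
  have hσ : ∀ y : F, Valued.v (σ y) = Valued.v y := hinv σ
  have hπ0 : π ≠ 0 := by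
    intro h; rw [h] at hπ; simp at hπ
  set x : F := σ π / π with hxdef
  have hx : σ π = π * x := by
    rw [hxdef, mul_div_cancel₀ _ hπ0]
  have hx1 : Valued.v (x - 1) = oz (-i) := by
    have h1 : x - 1 = (σ π - π) / π := by
      rw [hxdef, div_sub_one hπ0]
    rw [h1, map_div₀, hi, hπ]
    rw [div_eq_iff (oz_ne_zero _), oz_mul]
    congr 1
    ring
  have hxlt : Valued.v (x - 1) < 1 := by
    rw [hx1, ← oz_zero]
    exact oz_lt.mpr (by omega)
  have hpowc : Valued.v (x ^ c - 1) = oz (-i) := by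
    rw [zpow_sub_one_val hp hres hxlt hcp, hx1]
  have hπc0 : π ^ c ≠ 0 := zpow_ne_zero _ hπ0
  set u : F := f / π ^ c with hudef
  have hu : f = π ^ c * u := by
    rw [hudef, mul_div_cancel₀ _ hπc0]
  have hvπc : Valued.v (π ^ c) = oz (-c) := by
    rw [map_zpow₀, hπ, oz_zpow]
    congr 1
    ring
  have hvu : Valued.v u = 1 := by
    rw [hudef, map_div₀, hvf, hvπc, div_self (oz_ne_zero _)]
  have hσπc : σ (π ^ c) = π ^ c * x ^ c := by
    rw [map_zpow₀, hx, mul_zpow]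
  have hbig : Valued.v (u * (σ (π ^ c) - π ^ c)) = oz (-(c + i)) := by
    have h1 : σ (π ^ c) - π ^ c = π ^ c * (x ^ c - 1) := by
      rw [hσπc]; ring
    rw [Valuation.map_mul, hvu, one_mul, h1, Valuation.map_mul, hvπc, hpowc, oz_mul]
    congr 1
    ring
  have hsmall : Valued.v (σ (π ^ c) * (σ u - u)) ≤ oz (-(c + 1 + i)) := by
    rw [Valuation.map_mul, hσ, hvπc]
    have hsub : Valued.v (σ u - u) ≤ oz (-(1 + i)) :=
      sigma_sub_le htot π hπ σ hσ i (by omega) (le_of_eq hi) u (le_of_eq hvu)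
    calc oz (-c) * Valued.v (σ u - u) ≤ oz (-c) * oz (-(1+i)) := mul_le_mul_right hsub _
    _ = oz (-c + -(1+i)) := oz_mul _ _
    _ = oz (-(c+1+i)) := by congr 1; ring
  have hid : σ f - f = σ (π ^ c) * (σ u - u) + u * (σ (π ^ c) - π ^ c) := by
    conv_lhs => rw [hu]
    rw [map_mul]
    ring
  rw [hid]
  rw [Valuation.map_add_eq_of_lt_right, hbig]
  rw [hbig]
  refine lt_of_le_of_lt hsmall ?_
  exact oz_lt.mpr (by omega)
end

section
/- Let p be a prime, n_1, ..., n_h positive integers, and b_1 < b_2 < ⋯ < b_h positive integers coprime to p (the lower ramification jumps of a totally wildly ramified p-extension with [F_i : F_1] = p^{n_1 + ⋯ + n_{i-1}}). Suppose for each i ≥ 2 there exist an integer c_i and digits 0 ≤ w_j < p^{n_j} (j = 1, ..., i−1), not all zero, with b_i − b_{i−1} = −p^{n_1+⋯+n_{i−1}}·c_i + w_1·p^{n_2+⋯+n_{i−1}}·b_1 + ⋯ + w_{i−2}·p^{n_{i−1}}·b_{i−2} + (w_{i−1} − 1)·b_{i−1}. Then p^{n_1+⋯+n_{i−1}} divides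 b_i − b_{i−1} for all i if and only if in each such relation w_1 = ⋯ = w_{i−2} = 0 and w_{i−1} = 1. -/
open Finset

private lemma icc_sum_split (n : ℕ → ℕ) {j m : ℕ} (hjm : j ≤ m) :
    ∑ t ∈ Icc j m, n t = n j + ∑ t ∈ Icc (j + 1) m, n t := by
  have hins : Icc j m = insert j (Icc (j + 1) m) := by
    ext x; simp only [Finset.mem_Icc, Finset.mem_insert]; omega
  rw [hins, Finset.sum_insert (by simp)]

private lemma aux_all_zero
    (p : ℕ) (m : ℕ) (n : ℕ → ℕ) (a : ℕ → ℤ)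
    (hasize : ∀ j, 1 ≤ j → j ≤ m → a j ≠ 0 →
      ¬ (p : ℤ) ^ (∑ t ∈ Icc j m, n t) ∣ a j)
    (hadvd : ∀ j, 1 ≤ j → j ≤ m →
      (p : ℤ) ^ (∑ t ∈ Icc (j + 1) m, n t) ∣ a j)
    (hdvd : (p : ℤ) ^ (∑ t ∈ Icc 1 m, n t) ∣ ∑ j ∈ Icc 1 m, a j) :
    ∀ j ∈ Icc 1 m, a j = 0 := by
  by_contra hcon
  push_neg at hcon
  obtain ⟨j1, hj1, hj1ne⟩ := hcon
  set s := (Icc 1 m).filter (fun j => a j ≠ 0) with hs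
  have hsne : s.Nonempty := ⟨j1, Finset.mem_filter.mpr ⟨hj1, hj1ne⟩⟩
  set j0 := s.max' hsne with hj0
  have hj0mem : j0 ∈ s := s.max'_mem hsne
  obtain ⟨hj0I', hj0ne⟩ := Finset.mem_filter.mp hj0mem
  have hj0I := Finset.mem_Icc.mp hj0I'
  have hmax : ∀ j ∈ Icc 1 m, j0 < j → a j = 0 := by
    intro j hj hlt
    by_contra hne
    exact absurd (s.le_max' j (Finset.mem_filter.mpr ⟨hj, hne⟩)) (by omega)
  have hMsub : (p : ℤ) ^ (∑ t ∈ Icc j0 m, n t) ∣ (p : ℤ) ^ (∑ t ∈ Icc 1 m, n t) :=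
    pow_dvd_pow _ (Finset.sum_le_sum_of_subset (Finset.Icc_subset_Icc_left hj0I.1))
  have hrest : ∀ j ∈ (Icc 1 m).erase j0, (p : ℤ) ^ (∑ t ∈ Icc j0 m, n t) ∣ a j := by
    intro j hj
    obtain ⟨hne, hjI'⟩ := Finset.mem_erase.mp hj
    have hjI := Finset.mem_Icc.mp hjI'
    rcases lt_or_gt_of_ne hne with hlt | hgt
    · refine dvd_trans (pow_dvd_pow _ ?_) (hadvd j hjI.1 hjI.2)
      exact Finset.sum_le_sum_of_subset (Finset.Icc_subset_Icc_left (by omega))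
    · rw [hmax j hjI' hgt]; exact dvd_zero _
  have hkey : (p : ℤ) ^ (∑ t ∈ Icc j0 m, n t) ∣ a j0 := by
    have h1 : a j0 = (∑ j ∈ Icc 1 m, a j) - ∑ j ∈ (Icc 1 m).erase j0, a j := by
      rw [← Finset.add_sum_erase _ _ hj0I']; ring
    rw [h1]
    exact dvd_sub (hMsub.trans hdvd) (Finset.dvd_sum hrest)
  exact hasize j0 hj0I.1 hj0I.2 hj0ne hkey

/-- Numerical core of the main theorem.  Let `p` be a prime, `n 1, …, n h`
positive, and `b 1 < ⋯ < b h` positive integers coprime to `p` (the lower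
jumps of a totally wildly ramified `p`-extension).  Suppose for each
`2 ≤ i ≤ h` there are an integer `c i` and digits `0 ≤ w i j < p ^ n j`
(`1 ≤ j ≤ i−1`), not all zero, with
`b i − b (i−1) = −p^{n 1+⋯+n (i−1)}·c i + ∑_{j=1}^{i−1} w i j·p^{n (j+1)+⋯+n (i−1)}·b j − b (i−1)`.
Then `p^{n 1+⋯+n (i−1)} ∣ b i − b (i−1)` for all `i` iff in each relation
`w i j = 0` for `j ≤ i−2` and `w i (i−1) = 1`. -/
theorem hasse_arf_numerical_core
    (p : ℕ) (hp : p.Prime) (h : ℕ) (hh : 2 ≤ h)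
    (n : ℕ → ℕ) (hn : ∀ j, 1 ≤ j → j ≤ h → 0 < n j)
    (b : ℕ → ℤ)
    (hbpos : ∀ j, 1 ≤ j → j ≤ h → 0 < b j)
    (hbmono : StrictMonoOn b (Set.Icc 1 h))
    (hbcop : ∀ j, 1 ≤ j → j ≤ h → ¬ (p : ℤ) ∣ b j)
    (c : ℕ → ℤ) (w : ℕ → ℕ → ℕ)
    (hw : ∀ i, 2 ≤ i → i ≤ h → ∀ j, 1 ≤ j → j ≤ i - 1 → w i j < p ^ n j)
    (hwne : ∀ i, 2 ≤ i → i ≤ h → ∃ j, 1 ≤ j ∧ j ≤ i - 1 ∧ w i j ≠ 0)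
    (hrel : ∀ i, 2 ≤ i → i ≤ h →
      b i - b (i - 1) =
        -(p : ℤ) ^ (∑ t ∈ Icc 1 (i - 1), n t) * c i +
          (∑ j ∈ Icc 1 (i - 1),
            (w i j : ℤ) * (p : ℤ) ^ (∑ t ∈ Icc (j + 1) (i - 1), n t) * b j) -
          b (i - 1)) :
    (∀ i, 2 ≤ i → i ≤ h →
        (p : ℤ) ^ (∑ t ∈ Icc 1 (i - 1), n t) ∣ (b i - b (i - 1))) ↔
      (∀ i, 2 ≤ i → i ≤ h →
        (∀ j, 1 ≤ j → j ≤ i - 2 → w i j = 0) ∧ w i (i - 1) = 1) := by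
  have hppr : Prime (p : ℤ) := Nat.prime_iff_prime_int.mp hp
  constructor
  · intro hdvd i hi2 hih
    obtain ⟨m, rfl⟩ : ∃ m, i = m + 1 := ⟨i - 1, by omega⟩
    have hm1 : 1 ≤ m := by omega
    have him : m + 1 - 1 = m := by omega
    have hrel' := hrel (m + 1) hi2 hih
    have hdvd' := hdvd (m + 1) hi2 hih
    rw [him] at hrel' hdvd'
    -- the terms of the sum, with `b m` subtracted from the `m`-th one
    set a : ℕ → ℤ := fun j =>
      if j = m then ((w (m + 1) m : ℤ) - 1) * b m
      else (w (m + 1) j : ℤ) * (p : ℤ) ^ (∑ t ∈ Icc (j + 1) m, n t) * b j with ha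
    have hmem : m ∈ Icc 1 m := Finset.mem_Icc.mpr ⟨hm1, le_refl m⟩
    have hsum : ∑ j ∈ Icc 1 m, a j =
        (∑ j ∈ Icc 1 m,
          (w (m + 1) j : ℤ) * (p : ℤ) ^ (∑ t ∈ Icc (j + 1) m, n t) * b j) - b m := by
      rw [← Finset.add_sum_erase _ a hmem, ← Finset.add_sum_erase _ _ hmem]
      have h1 : ∑ j ∈ (Icc 1 m).erase m, a j =
          ∑ j ∈ (Icc 1 m).erase m,
            (w (m + 1) j : ℤ) * (p : ℤ) ^ (∑ t ∈ Icc (j + 1) m, n t) * b j :=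
        Finset.sum_congr rfl fun j hj => by
          have : j ≠ m := (Finset.mem_erase.mp hj).1
          simp [ha, this]
      rw [h1]
      have hEm : (∑ t ∈ Icc (m + 1) m, n t) = 0 := by
        rw [Finset.Icc_eq_empty (by omega)]; simp
      simp only [ha, if_pos rfl, hEm, pow_zero]
      ring
    have hdT : (p : ℤ) ^ (∑ t ∈ Icc 1 m, n t) ∣ ∑ j ∈ Icc 1 m, a j := by
      rw [hsum]
      have heq : (∑ j ∈ Icc 1 m,
          (w (m + 1) j : ℤ) * (p : ℤ) ^ (∑ t ∈ Icc (j + 1) m, n t) * b j) - b m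
          = (b (m + 1) - b m) + (p : ℤ) ^ (∑ t ∈ Icc 1 m, n t) * c (m + 1) := by
        rw [hrel']; ring
      rw [heq]
      exact dvd_add hdvd' (Dvd.intro _ rfl)
    have hzero : ∀ j ∈ Icc 1 m, a j = 0 := by
      refine aux_all_zero p m n a ?_ ?_ hdT
      · intro j hj1 hjm hane hdvdj
        have hbj : ¬ (p : ℤ) ∣ b j := hbcop j hj1 (by omega)
        have hsplit : (∑ t ∈ Icc j m, n t) = n j + ∑ t ∈ Icc (j + 1) m, n t :=
          icc_sum_split n hjm
        by_cases hjm' : j = m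
        · subst hjm'
          have hEm : (∑ t ∈ Icc (j + 1) j, n t) = 0 := by
            rw [Finset.Icc_eq_empty (by omega)]; simp
          rw [hsplit, hEm] at hdvdj
          simp only [add_zero] at hdvdj
          simp only [ha, if_pos rfl] at hdvdj hane
          have hwne0 : (w (j + 1) j : ℤ) - 1 ≠ 0 := by
            intro h0; exact hane (by rw [h0]; ring)
          have hd1 : (p : ℤ) ^ n j ∣ ((w (j + 1) j : ℤ) - 1) :=
            hppr.pow_dvd_of_dvd_mul_right _ hbj hdvdj
          have hwlt : w (j + 1) j < p ^ n j := hw (j + 1) (by omega) (by omega) j hj1 (by omega)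
          have hplarge : (2 : ℤ) ≤ (p : ℤ) ^ n j := by
            calc (2 : ℤ) ≤ (p : ℤ) := by exact_mod_cast hp.two_le
            _ ≤ (p : ℤ) ^ n j := by
                exact_mod_cast Nat.le_self_pow (by have := hn j hj1 (by omega); omega) p
          have habs : |(w (j + 1) j : ℤ) - 1| < (p : ℤ) ^ n j := by
            have : (w (j + 1) j : ℤ) < (p : ℤ) ^ n j := by exact_mod_cast hwlt
            have h0 : (0 : ℤ) ≤ (w (j + 1) j : ℤ) := by positivity
            rw [abs_lt]; constructor <;> linarith
          exact hwne0 (Int.eq_zero_of_abs_lt_dvd hd1 habs)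
        · simp only [ha, if_neg hjm'] at hdvdj hane
          have hwne0 : (w (m + 1) j : ℤ) ≠ 0 := by
            intro h0; exact hane (by rw [h0]; ring)
          have hdvdj' : (p : ℤ) ^ n j ∣ (w (m + 1) j : ℤ) * b j := by
            have hP : ((p : ℤ) ^ (∑ t ∈ Icc (j + 1) m, n t)) ≠ 0 :=
              pow_ne_zero _ (Int.natCast_ne_zero.mpr hp.ne_zero)
            refine (mul_dvd_mul_iff_left hP).mp ?_
            calc (p : ℤ) ^ (∑ t ∈ Icc (j + 1) m, n t) * (p : ℤ) ^ n j
                = (p : ℤ) ^ (n j + ∑ t ∈ Icc (j + 1) m, n t) := by rw [pow_add]; ring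
              _ ∣ (w (m + 1) j : ℤ) * (p : ℤ) ^ (∑ t ∈ Icc (j + 1) m, n t) * b j := by
                  rw [← hsplit]; exact hdvdj
              _ = (p : ℤ) ^ (∑ t ∈ Icc (j + 1) m, n t) * ((w (m + 1) j : ℤ) * b j) := by
                  ring
          have hd1 : (p : ℤ) ^ n j ∣ (w (m + 1) j : ℤ) :=
            hppr.pow_dvd_of_dvd_mul_right _ hbj hdvdj'
          have hwlt : w (m + 1) j < p ^ n j := hw (m + 1) (by omega) (by omega) j hj1 (by omega)
          have habs : |(w (m + 1) j : ℤ)| < (p : ℤ) ^ n j := by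
            rw [abs_of_nonneg (Int.natCast_nonneg _)]
            exact_mod_cast hwlt
          exact hwne0 (Int.eq_zero_of_abs_lt_dvd hd1 habs)
      · intro j hj1 hjm
        by_cases hjm' : j = m
        · subst hjm'
          have hEm : (∑ t ∈ Icc (j + 1) j, n t) = 0 := by
            rw [Finset.Icc_eq_empty (by omega)]; simp
          rw [hEm, pow_zero]
          exact one_dvd _
        · simp only [ha, if_neg hjm']
          exact dvd_mul_of_dvd_left (dvd_mul_left _ _) _
    constructor
    · intro j hj1 hjm2
      have hjm : j ∈ Icc 1 m := Finset.mem_Icc.mpr ⟨hj1, by omega⟩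
      have := hzero j hjm
      have hjne : j ≠ m := by omega
      simp only [ha, if_neg hjne] at this
      have hbj : b j ≠ 0 := (hbpos j hj1 (by omega)).ne'
      have hpne : ((p : ℤ) ^ (∑ t ∈ Icc (j + 1) m, n t)) ≠ 0 :=
        pow_ne_zero _ (Int.natCast_ne_zero.mpr hp.ne_zero)
      rcases mul_eq_zero.mp this with h1 | h1
      · rcases mul_eq_zero.mp h1 with h2 | h2
        · exact_mod_cast h2
        · exact absurd h2 hpne
      · exact absurd h1 hbj
    · have := hzero m hmem
      simp only [ha, if_pos rfl] at this
      have hbm : b m ≠ 0 := (hbpos m hm1 (by omega)).ne'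
      rcases mul_eq_zero.mp this with h1 | h1
      · have : (w (m + 1) m : ℤ) = 1 := by linarith
        rw [him]
        exact_mod_cast this
      · exact absurd h1 hbm
  · intro hW i hi2 hih
    obtain ⟨m, rfl⟩ : ∃ m, i = m + 1 := ⟨i - 1, by omega⟩
    have hm1 : 1 ≤ m := by omega
    have him : m + 1 - 1 = m := by omega
    have hrel' := hrel (m + 1) hi2 hih
    rw [him] at hrel' ⊢
    obtain ⟨hW0, hW1⟩ := hW (m + 1) hi2 hih
    rw [him] at hW1
    have hmem : m ∈ Icc 1 m := Finset.mem_Icc.mpr ⟨hm1, le_refl m⟩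
    have hsum : (∑ j ∈ Icc 1 m,
        (w (m + 1) j : ℤ) * (p : ℤ) ^ (∑ t ∈ Icc (j + 1) m, n t) * b j) = b m := by
      rw [← Finset.add_sum_erase _ _ hmem]
      have h1 : ∑ j ∈ (Icc 1 m).erase m,
          (w (m + 1) j : ℤ) * (p : ℤ) ^ (∑ t ∈ Icc (j + 1) m, n t) * b j = 0 := by
        refine Finset.sum_eq_zero fun j hj => ?_
        obtain ⟨hne, hjI'⟩ := Finset.mem_erase.mp hj
        have hjI := Finset.mem_Icc.mp hjI'
        have : w (m + 1) j = 0 := hW0 j hjI.1 (by omega)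
        rw [this]; push_cast; ring
      rw [h1]
      have hEm : (∑ t ∈ Icc (m + 1) m, n t) = 0 := by
        rw [Finset.Icc_eq_empty (by omega)]; simp
      rw [hW1, hEm]
      push_cast; ring
    rw [hrel', hsum]
    have : -(p : ℤ) ^ (∑ t ∈ Icc 1 m, n t) * c (m + 1) + b m - b m
        = (p : ℤ) ^ (∑ t ∈ Icc 1 m, n t) * (-c (m + 1)) := by ring
    rw [this]
    exact Dvd.intro _ rfl
end
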